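/- Let n ≥ 3 be odd and let A be the 2n×2n adjacency matrix of the graph K_1 ∨ (n·K_1 ⊔ K_{n-1}), i.e., the join of a single vertex with the disjoint union of n isolated vertices and a complete graph on n-1 vertices. Then the characteristic polynomial of A equals λ^(n-1)·(λ+1)^(n-2)·(λ³ - (n-2)λ² - (2n-1)λ + n(n-2)). -/
import Mathlib


open Matrix Polynomial

/-- Adjacency matrix of the graph `K_1 ∨ (n·K_1 ⊔ K_{n-1})` on `2n` vertices:
vertex `0` is the cone vertex (adjacent to all others), vertices `1, …, n-1`
form a complete graph `K_{n-1}`, and vertices `n, …, 2n-1` are `n` isolated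
vertices (adjacent only to the cone vertex). -/
def adjJoinOdd (n : ℕ) : Matrix (Fin (2 * n)) (Fin (2 * n)) ℝ :=
  Matrix.of fun i j =>
    if i ≠ j ∧ (i.val = 0 ∨ j.val = 0 ∨ (i.val < n ∧ j.val < n)) then 1 else 0

open Finset

noncomputable def escInd (p : Prop) [Decidable p] : ℝ := if p then 1 else 0

noncomputable def escAf (n a b : ℕ) : ℝ :=
  if ¬a = b ∧ (a = 0 ∨ b = 0 ∨ (a < n ∧ b < n)) then 1 else 0

noncomputable def escPf (n a b : ℕ) : ℝ :=
  if b = 0 then escInd (a = 0)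
  else if b = 1 then escInd (a = 1)
  else if b = 2 then escInd (a = n)
  else if b ≤ n then escInd (a = b - 1) - escInd (a = 1)
  else escInd (a = b) - escInd (a = n)

noncomputable def escQf (n a b : ℕ) : ℝ :=
  if b = 0 then escInd (a = 0)
  else if b = 1 then escInd (a = 1)
  else if b < n then escInd (a = b + 1) + escInd (a = 1)
  else if b = n then escInd (a = 2)
  else escInd (a = b) + escInd (a = 2)

noncomputable def escBf (n a b : ℕ) : ℝ :=
  if b = 0 then (if a = 1 then (n : ℝ) - 1 else if a = 2 then (n : ℝ) else escInd (3 ≤ a))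
  else if b = 1 then (if a = 0 then 1 else if a = 1 then (n : ℝ) - 2 else escInd (3 ≤ a ∧ a ≤ n))
  else if b = 2 then escInd (a = 0)
  else if b ≤ n then -escInd (a = b)
  else 0

lemma esc_sum_mul_delta (s : Finset ℕ) (t : ℕ) (f : ℕ → ℝ) (ht : t ∈ s) :
    ∑ k ∈ s, f k * escInd (k = t) = f t := by
  have h : ∀ k ∈ s, f k * escInd (k = t) = if k = t then f k else 0 := by
    intro k _
    unfold escInd
    split_ifs <;> simp
  rw [Finset.sum_congr rfl h, Finset.sum_ite_eq' s t f, if_pos ht]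

lemma esc_sum_delta_mem (s : Finset ℕ) (a : ℕ) :
    ∑ k ∈ s, escInd (a = k) = escInd (a ∈ s) := by
  simp only [escInd]
  rw [Finset.sum_ite_eq s a (fun _ => (1:ℝ))]

lemma esc_sum_Ico_delta (a c d : ℕ) :
    ∑ k ∈ Ico c d, escInd (a = k) = escInd (c ≤ a ∧ a < d) := by
  rw [esc_sum_delta_mem]
  unfold escInd
  exact if_congr (by simp [Finset.mem_Ico]) rfl rfl

lemma esc_sum_Ico_delta_pred (n a : ℕ) (hn : 3 ≤ n) :
    ∑ k ∈ Ico 3 (n+1), escInd (a = k - 1) = escInd (2 ≤ a ∧ a < n) := by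
  have h1 : ∀ k ∈ Ico 3 (n+1), escInd (a = k - 1) = escInd (a + 1 = k) := by
    intro k hk
    rw [Finset.mem_Ico] at hk
    unfold escInd
    exact if_congr (by omega) rfl rfl
  rw [Finset.sum_congr rfl h1, esc_sum_delta_mem]
  unfold escInd
  exact if_congr (by rw [Finset.mem_Ico]; omega) rfl rfl

lemma esc_sum_const (c d : ℕ) (r : ℝ) : ∑ _k ∈ Ico c d, r = ((d - c : ℕ) : ℝ) * r := by
  rw [Finset.sum_const, Nat.card_Ico, nsmul_eq_mul]

lemma esc_sum_split (n : ℕ) (hn : 3 ≤ n) (f : ℕ → ℝ) :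
    ∑ k ∈ range (2*n), f k
      = f 0 + f 1 + f 2 + (∑ k ∈ Ico 3 (n+1), f k) + ∑ k ∈ Ico (n+1) (2*n), f k := by
  have h1 : ∑ k ∈ Ico 0 (n+1), f k + ∑ k ∈ Ico (n+1) (2*n), f k = ∑ k ∈ Ico 0 (2*n), f k :=
    Finset.sum_Ico_consecutive f (by omega) (by omega)
  have h2 : ∑ k ∈ Ico 0 3, f k + ∑ k ∈ Ico 3 (n+1), f k = ∑ k ∈ Ico 0 (n+1), f k :=
    Finset.sum_Ico_consecutive f (by omega) (by omega)
  have h3 : ∑ k ∈ Ico 0 3, f k = f 0 + f 1 + f 2 := by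
    rw [← Finset.range_eq_Ico]
    simp [Finset.sum_range_succ]
  rw [Finset.range_eq_Ico, ← h1, ← h2, h3]

lemma escPf_col0 (n k : ℕ) : escPf n k 0 = escInd (k = 0) := by simp [escPf]

lemma escPf_col1 (n k : ℕ) : escPf n k 1 = escInd (k = 1) := by simp [escPf]

lemma escPf_col2 (n k : ℕ) : escPf n k 2 = escInd (k = n) := by norm_num [escPf]

lemma escPf_colC (n k b : ℕ) (hb3 : 3 ≤ b) (hbn : b ≤ n) :
    escPf n k b = escInd (k = b - 1) - escInd (k = 1) := by
  unfold escPf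
  rw [if_neg (by omega), if_neg (by omega), if_neg (by omega), if_pos hbn]

lemma escPf_colI (n k b : ℕ) (hn : 3 ≤ n) (hb : n < b) :
    escPf n k b = escInd (k = b) - escInd (k = n) := by
  unfold escPf
  rw [if_neg (by omega), if_neg (by omega), if_neg (by omega), if_neg (by omega)]

lemma escBf_col0 (n k : ℕ) (hk : 3 ≤ k) : escBf n k 0 = 1 := by
  unfold escBf
  rw [if_pos rfl, if_neg (by omega), if_neg (by omega)]
  unfold escInd
  rw [if_pos hk]

lemma escBf_col1 (n k : ℕ) (hk : 3 ≤ k) (hkn : k ≤ n) : escBf n k 1 = 1 := by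
  unfold escBf
  rw [if_neg (by omega), if_pos rfl, if_neg (by omega), if_neg (by omega)]
  unfold escInd
  rw [if_pos ⟨hk, hkn⟩]

lemma escBf_col1' (n k : ℕ) (hn : 3 ≤ n) (hk : n < k) : escBf n k 1 = 0 := by
  unfold escBf
  rw [if_neg (by omega), if_pos rfl, if_neg (by omega), if_neg (by omega)]
  unfold escInd
  rw [if_neg (by omega)]

lemma escBf_col2 (n k : ℕ) (hk : 3 ≤ k) : escBf n k 2 = 0 := by
  unfold escBf
  rw [if_neg (by omega), if_neg (by omega), if_pos rfl]
  unfold escInd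
  rw [if_neg (by omega)]

lemma escBf_colC (n k b : ℕ) (hb : 3 ≤ b) (hbn : b ≤ n) :
    escBf n k b = -escInd (k = b) := by
  unfold escBf
  rw [if_neg (by omega), if_neg (by omega), if_neg (by omega), if_pos hbn]

lemma escBf_colI (n k b : ℕ) (hn : 3 ≤ n) (hb : n < b) : escBf n k b = 0 := by
  unfold escBf
  rw [if_neg (by omega), if_neg (by omega), if_neg (by omega), if_neg (by omega)]


lemma escAf_eval0 (n a : ℕ) : escAf n a 0 = escInd (¬a = 0) := by
  unfold escAf escInd
  exact if_congr (by omega) rfl rfl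

lemma escAf_eval1 (n a : ℕ) (hn : 3 ≤ n) : escAf n a 1 = escInd (¬a = 1 ∧ a < n) := by
  unfold escAf escInd
  exact if_congr (by omega) rfl rfl

lemma escAf_evaln (n a : ℕ) (hn : 3 ≤ n) : escAf n a n = escInd (a = 0) := by
  unfold escAf escInd
  exact if_congr (by omega) rfl rfl

lemma escAf_evalC (n a t : ℕ) (h1 : 1 ≤ t) (h2 : t < n) :
    escAf n a t = escInd (¬a = t ∧ a < n) := by
  unfold escAf escInd
  exact if_congr (by omega) rfl rfl

lemma escAf_evalI (n a t : ℕ) (h1 : n < t) : escAf n a t = escInd (a = 0) := by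
  unfold escAf escInd
  exact if_congr (by omega) rfl rfl

lemma esc_key1 (n : ℕ) (hn : 3 ≤ n) (a b : ℕ) (ha : a < 2*n) (hb : b < 2*n) :
    ∑ k ∈ range (2*n), escAf n a k * escPf n k b
      = ∑ k ∈ range (2*n), escPf n a k * escBf n k b := by
  have h0m : (0:ℕ) ∈ range (2*n) := by rw [Finset.mem_range]; omega
  have h1m : (1:ℕ) ∈ range (2*n) := by rw [Finset.mem_range]; omega
  have hnm : n ∈ range (2*n) := by rw [Finset.mem_range]; omega
  -- the two "middle range" sums of rows of P
  have hPC : ∑ k ∈ Ico 3 (n+1), (escInd (a = k - 1) - escInd (a = 1))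
      = escInd (2 ≤ a ∧ a < n) - ((n:ℝ) - 2) * escInd (a = 1) := by
    rw [Finset.sum_sub_distrib, esc_sum_Ico_delta_pred n a hn, esc_sum_const]
    rw [show n + 1 - 3 = n - 2 from by omega, Nat.cast_sub (by omega)]
    norm_num
  have hPI : ∑ k ∈ Ico (n+1) (2*n), (escInd (a = k) - escInd (a = n))
      = escInd (n+1 ≤ a ∧ a < 2*n) - ((n:ℝ) - 1) * escInd (a = n) := by
    rw [Finset.sum_sub_distrib, esc_sum_Ico_delta, esc_sum_const]
    rw [show 2*n - (n+1) = n - 1 from by omega, Nat.cast_sub (by omega)]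
    norm_num
  by_cases hb0 : b = 0
  · subst hb0
    simp only [escPf_col0]
    rw [esc_sum_mul_delta _ _ _ h0m, esc_sum_split n hn]
    have eC : ∑ k ∈ Ico 3 (n+1), escPf n a k * escBf n k 0
        = ∑ k ∈ Ico 3 (n+1), (escInd (a = k - 1) - escInd (a = 1)) := by
      refine Finset.sum_congr rfl fun k hk => ?_
      rw [Finset.mem_Ico] at hk
      rw [escPf_colC n a k (by omega) (by omega), escBf_col0 n k (by omega), mul_one]
    have eI : ∑ k ∈ Ico (n+1) (2*n), escPf n a k * escBf n k 0
        = ∑ k ∈ Ico (n+1) (2*n), (escInd (a = k) - escInd (a = n)) := by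
      refine Finset.sum_congr rfl fun k hk => ?_
      rw [Finset.mem_Ico] at hk
      rw [escPf_colI n a k hn (by omega), escBf_col0 n k (by omega), mul_one]
    rw [eC, eI, hPC, hPI, escPf_col0, escPf_col1, escPf_col2]
    have eB0 : escBf n 0 0 = 0 := by norm_num [escBf, escInd]
    have eB1 : escBf n 1 0 = (n:ℝ) - 1 := by norm_num [escBf]
    have eB2 : escBf n 2 0 = (n:ℝ) := by norm_num [escBf]
    rw [eB0, eB1, eB2, escAf_eval0]
    unfold escInd
    split_ifs <;> first | ring1 | (exfalso; omega)
  by_cases hb1 : b = 1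
  · subst hb1
    simp only [escPf_col1]
    rw [esc_sum_mul_delta _ _ _ h1m, esc_sum_split n hn]
    have eC : ∑ k ∈ Ico 3 (n+1), escPf n a k * escBf n k 1
        = ∑ k ∈ Ico 3 (n+1), (escInd (a = k - 1) - escInd (a = 1)) := by
      refine Finset.sum_congr rfl fun k hk => ?_
      rw [Finset.mem_Ico] at hk
      rw [escPf_colC n a k (by omega) (by omega), escBf_col1 n k (by omega) (by omega), mul_one]
    have eI : ∑ k ∈ Ico (n+1) (2*n), escPf n a k * escBf n k 1 = 0 := by
      rw [Finset.sum_congr rfl fun k hk => ?_, Finset.sum_const_zero]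
      rw [Finset.mem_Ico] at hk
      rw [escBf_col1' n k hn (by omega), mul_zero]
    rw [eC, eI, hPC, escPf_col0, escPf_col1, escPf_col2]
    have eB0 : escBf n 0 1 = 1 := by norm_num [escBf]
    have eB1 : escBf n 1 1 = (n:ℝ) - 2 := by norm_num [escBf]
    have eB2 : escBf n 2 1 = 0 := by norm_num [escBf, escInd]
    rw [eB0, eB1, eB2, escAf_eval1 n a hn]
    unfold escInd
    split_ifs <;> first | ring1 | (exfalso; omega)
  by_cases hb2 : b = 2
  · subst hb2
    simp only [escPf_col2]
    rw [esc_sum_mul_delta _ _ _ hnm, esc_sum_split n hn]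
    have eC : ∑ k ∈ Ico 3 (n+1), escPf n a k * escBf n k 2 = 0 := by
      rw [Finset.sum_congr rfl fun k hk => ?_, Finset.sum_const_zero]
      rw [Finset.mem_Ico] at hk
      rw [escBf_col2 n k (by omega), mul_zero]
    have eI : ∑ k ∈ Ico (n+1) (2*n), escPf n a k * escBf n k 2 = 0 := by
      rw [Finset.sum_congr rfl fun k hk => ?_, Finset.sum_const_zero]
      rw [Finset.mem_Ico] at hk
      rw [escBf_col2 n k (by omega), mul_zero]
    rw [eC, eI, escPf_col0, escPf_col1, escPf_col2]
    have eB0 : escBf n 0 2 = 1 := by norm_num [escBf, escInd]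
    have eB1 : escBf n 1 2 = 0 := by norm_num [escBf, escInd]
    have eB2 : escBf n 2 2 = 0 := by norm_num [escBf, escInd]
    rw [eB0, eB1, eB2, escAf_evaln n a hn]
    unfold escInd
    split_ifs <;> first | ring1 | (exfalso; omega)
  by_cases hbn : b ≤ n
  · -- 3 ≤ b ≤ n
    have hb3 : 3 ≤ b := by omega
    have hLc : ∀ k ∈ range (2*n), escAf n a k * escPf n k b
        = escAf n a k * escInd (k = b - 1) - escAf n a k * escInd (k = 1) := by
      intro k _
      rw [escPf_colC n k b hb3 hbn, mul_sub]
    rw [Finset.sum_congr rfl hLc, Finset.sum_sub_distrib,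
      esc_sum_mul_delta _ _ _ (by rw [Finset.mem_range]; omega),
      esc_sum_mul_delta _ _ _ h1m, esc_sum_split n hn]
    have eC : ∑ k ∈ Ico 3 (n+1), escPf n a k * escBf n k b
        = -(escInd (a = b - 1) - escInd (a = 1)) := by
      have h : ∀ k ∈ Ico 3 (n+1), escPf n a k * escBf n k b
          = -((escInd (a = k - 1) - escInd (a = 1)) * escInd (k = b)) := by
        intro k hk
        rw [Finset.mem_Ico] at hk
        rw [escPf_colC n a k (by omega) (by omega), escBf_colC n k b hb3 hbn, mul_neg]
      rw [Finset.sum_congr rfl h, Finset.sum_neg_distrib,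
        esc_sum_mul_delta _ _ _ (by rw [Finset.mem_Ico]; omega)]
    have eI : ∑ k ∈ Ico (n+1) (2*n), escPf n a k * escBf n k b = 0 := by
      rw [Finset.sum_congr rfl fun k hk => ?_, Finset.sum_const_zero]
      rw [Finset.mem_Ico] at hk
      rw [escBf_colC n k b hb3 hbn, mul_neg]
      unfold escInd
      rw [if_neg (by omega), mul_zero, neg_zero]
    rw [eC, eI, escPf_col0, escPf_col1, escPf_col2]
    have eB0 : escBf n 0 b = 0 := by
      rw [escBf_colC n 0 b hb3 hbn]
      unfold escInd
      rw [if_neg (by omega), neg_zero]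
    have eB1 : escBf n 1 b = 0 := by
      rw [escBf_colC n 1 b hb3 hbn]
      unfold escInd
      rw [if_neg (by omega), neg_zero]
    have eB2 : escBf n 2 b = 0 := by
      rw [escBf_colC n 2 b hb3 hbn]
      unfold escInd
      rw [if_neg (by omega), neg_zero]
    rw [eB0, eB1, eB2, escAf_evalC n a (b-1) (by omega) (by omega), escAf_eval1 n a hn]
    unfold escInd
    split_ifs <;> first | ring1 | (exfalso; omega)
  · -- n < b
    have hbn' : n < b := by omega
    have hLc : ∀ k ∈ range (2*n), escAf n a k * escPf n k b
        = escAf n a k * escInd (k = b) - escAf n a k * escInd (k = n) := by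
      intro k _
      rw [escPf_colI n k b hn hbn', mul_sub]
    rw [Finset.sum_congr rfl hLc, Finset.sum_sub_distrib,
      esc_sum_mul_delta _ _ _ (by rw [Finset.mem_range]; omega),
      esc_sum_mul_delta _ _ _ hnm]
    have eR : ∑ k ∈ range (2*n), escPf n a k * escBf n k b = 0 := by
      rw [Finset.sum_congr rfl fun k hk => ?_, Finset.sum_const_zero]
      rw [escBf_colI n k b hn hbn', mul_zero]
    rw [eR, escAf_evalI n a b hbn', escAf_evaln n a hn]
    unfold escInd
    split_ifs <;> first | ring1 | (exfalso; omega)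

lemma escQf_eval1 (n a : ℕ) : escQf n a 1 = escInd (a = 1) := by simp [escQf]

lemma esc_key2 (n : ℕ) (hn : 3 ≤ n) (a b : ℕ) (ha : a < 2*n) (hb : b < 2*n) :
    ∑ k ∈ range (2*n), escQf n a k * escPf n k b = if a = b then 1 else 0 := by
  have h0m : (0:ℕ) ∈ range (2*n) := by rw [Finset.mem_range]; omega
  have h1m : (1:ℕ) ∈ range (2*n) := by rw [Finset.mem_range]; omega
  have hnm : n ∈ range (2*n) := by rw [Finset.mem_range]; omega
  by_cases hb0 : b = 0
  · subst hb0
    simp only [escPf_col0]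
    rw [esc_sum_mul_delta _ _ _ h0m]
    simp only [escQf, if_pos rfl]
    unfold escInd
    rfl
  by_cases hb1 : b = 1
  · subst hb1
    simp only [escPf_col1]
    rw [esc_sum_mul_delta _ _ _ h1m, escQf_eval1]
    unfold escInd
    rfl
  by_cases hb2 : b = 2
  · subst hb2
    simp only [escPf_col2]
    rw [esc_sum_mul_delta _ _ _ hnm]
    have : escQf n a n = escInd (a = 2) := by
      unfold escQf
      rw [if_neg (by omega), if_neg (by omega), if_neg (by omega), if_pos rfl]
    rw [this]
    unfold escInd
    exact if_congr (by omega) rfl rfl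
  by_cases hbn : b ≤ n
  · have hb3 : 3 ≤ b := by omega
    have hc : ∀ k ∈ range (2*n), escQf n a k * escPf n k b
        = escQf n a k * escInd (k = b - 1) - escQf n a k * escInd (k = 1) := by
      intro k _
      rw [escPf_colC n k b hb3 hbn, mul_sub]
    rw [Finset.sum_congr rfl hc, Finset.sum_sub_distrib,
      esc_sum_mul_delta _ _ _ (by rw [Finset.mem_range]; omega),
      esc_sum_mul_delta _ _ _ h1m, escQf_eval1]
    have : escQf n a (b-1) = escInd (a = b) + escInd (a = 1) := by
      unfold escQf
      rw [if_neg (by omega), if_neg (by omega), if_pos (by omega),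
        show b - 1 + 1 = b from by omega]
    rw [this]
    unfold escInd
    split_ifs <;> first | ring1 | (exfalso; omega)
  · have hbn' : n < b := by omega
    have hc : ∀ k ∈ range (2*n), escQf n a k * escPf n k b
        = escQf n a k * escInd (k = b) - escQf n a k * escInd (k = n) := by
      intro k _
      rw [escPf_colI n k b hn hbn', mul_sub]
    rw [Finset.sum_congr rfl hc, Finset.sum_sub_distrib,
      esc_sum_mul_delta _ _ _ (by rw [Finset.mem_range]; omega),
      esc_sum_mul_delta _ _ _ hnm]
    have h1 : escQf n a b = escInd (a = b) + escInd (a = 2) := by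
      unfold escQf
      rw [if_neg (by omega), if_neg (by omega), if_neg (by omega), if_neg (by omega)]
    have h2 : escQf n a n = escInd (a = 2) := by
      unfold escQf
      rw [if_neg (by omega), if_neg (by omega), if_neg (by omega), if_pos rfl]
    rw [h1, h2]
    unfold escInd
    split_ifs <;> first | ring1 | (exfalso; omega)

noncomputable def escP (n : ℕ) : Matrix (Fin (2*n)) (Fin (2*n)) ℝ :=
  Matrix.of fun i j => escPf n i.1 j.1

noncomputable def escQ (n : ℕ) : Matrix (Fin (2*n)) (Fin (2*n)) ℝ :=
  Matrix.of fun i j => escQf n i.1 j.1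

noncomputable def escB (n : ℕ) : Matrix (Fin (2*n)) (Fin (2*n)) ℝ :=
  Matrix.of fun i j => escBf n i.1 j.1

lemma esc_adj_apply (n : ℕ) (i j : Fin (2*n)) : adjJoinOdd n i j = escAf n i.1 j.1 := by
  show (if i ≠ j ∧ (i.val = 0 ∨ j.val = 0 ∨ (i.val < n ∧ j.val < n)) then (1:ℝ) else 0) = _
  unfold escAf
  refine if_congr ?_ rfl rfl
  rw [Ne, Fin.ext_iff]

lemma esc_AP (n : ℕ) (hn : 3 ≤ n) : adjJoinOdd n * escP n = escP n * escB n := by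
  ext i j
  rw [Matrix.mul_apply, Matrix.mul_apply]
  simp only [esc_adj_apply, escP, escB, Matrix.of_apply]
  have h1 := Fin.sum_univ_eq_sum_range (fun x : ℕ => escAf n i.1 x * escPf n x j.1) (2*n)
  have h2 := Fin.sum_univ_eq_sum_range (fun x : ℕ => escPf n i.1 x * escBf n x j.1) (2*n)
  exact h1.trans ((esc_key1 n hn i.1 j.1 i.isLt j.isLt).trans h2.symm)

lemma esc_QP (n : ℕ) (hn : 3 ≤ n) : escQ n * escP n = 1 := by
  ext i j
  rw [Matrix.mul_apply, Matrix.one_apply]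
  simp only [escQ, escP, Matrix.of_apply]
  have h1 := Fin.sum_univ_eq_sum_range (fun x : ℕ => escQf n i.1 x * escPf n x j.1) (2*n)
  refine h1.trans ((esc_key2 n hn i.1 j.1 i.isLt j.isLt).trans ?_)
  exact if_congr Fin.ext_iff.symm rfl rfl

lemma esc_charpoly_conj {m : Type*} [DecidableEq m] [Fintype m]
    (A B P Q : Matrix m m ℝ) (h1 : Q * P = 1) (h2 : A * P = P * B) :
    B.charpoly = A.charpoly := by
  have hB : B = Q * A * P := by
    rw [Matrix.mul_assoc, h2, ← Matrix.mul_assoc, h1, one_mul]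
  have hQP : Q.map (C : ℝ →+* ℝ[X]) * P.map (C : ℝ →+* ℝ[X]) = 1 := by
    rw [← Matrix.map_mul, h1, Matrix.map_one _ (map_zero C) (map_one C)]
  have hcomm : Q.map (C : ℝ →+* ℝ[X]) * Matrix.scalar m (X : ℝ[X])
      = Matrix.scalar m (X : ℝ[X]) * Q.map (C : ℝ →+* ℝ[X]) :=
    (Matrix.scalar_commute (X : ℝ[X]) (fun r' => Commute.all _ r') _).symm
  have key : charmatrix (Q * A * P)
      = Q.map (C : ℝ →+* ℝ[X]) * charmatrix A * P.map (C : ℝ →+* ℝ[X]) := by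
    unfold charmatrix
    simp only [RingHom.mapMatrix_apply]
    rw [Matrix.map_mul, Matrix.map_mul, Matrix.mul_sub, Matrix.sub_mul, hcomm,
      Matrix.mul_assoc (Matrix.scalar m (X : ℝ[X])), hQP, mul_one]
  rw [Matrix.charpoly, Matrix.charpoly, hB, key, Matrix.det_mul, Matrix.det_mul,
    mul_right_comm, ← Matrix.det_mul, hQP, Matrix.det_one, one_mul]

lemma escBf_eq_zero' (n a b : ℕ) (hb : 3 ≤ b) (hab : ¬a = b) : escBf n a b = 0 := by
  unfold escBf
  rw [if_neg (by omega), if_neg (by omega), if_neg (by omega)]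
  split_ifs with h
  · unfold escInd
    rw [if_neg hab, neg_zero]
  · rfl

lemma esc_charpoly_B (n : ℕ) (hn : 3 ≤ n) :
    (escB n).charpoly =
      X ^ (n - 1) * (X + 1) ^ (n - 2) *
        (X ^ 3 - C ((n : ℝ) - 2) * X ^ 2 - C (2 * (n : ℝ) - 1) * X
          + C ((n : ℝ) * ((n : ℝ) - 2))) := by
  have h3 : 3 + (2*n-3) = 2*n := by omega
  set e : Fin 3 ⊕ Fin (2*n-3) ≃ Fin (2*n) := finSumFinEquiv.trans (finCongr h3) with he
  have hval_l : ∀ i : Fin 3, ((e (Sum.inl i)) : ℕ) = (i : ℕ) := by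
    intro i
    simp [he, finSumFinEquiv_apply_left]
  have hval_r : ∀ k : Fin (2*n-3), ((e (Sum.inr k)) : ℕ) = 3 + (k : ℕ) := by
    intro k
    simp [he, finSumFinEquiv_apply_right]
  have hent : ∀ (x y : Fin (2*n)),
      charmatrix (escB n) x y = (if x = y then X else 0) - C (escBf n x.1 y.1) := by
    intro x y
    by_cases hxy : x = y
    · subst hxy
      rw [Matrix.charmatrix_apply_eq, if_pos rfl]
      rfl
    · rw [Matrix.charmatrix_apply_ne _ _ _ hxy, if_neg hxy, zero_sub]
      rfl
  rw [Matrix.charpoly, ← Matrix.det_submatrix_equiv_self e]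
  set M := (charmatrix (escB n)).submatrix e e with hM
  have h12 : M.toBlocks₁₂ = 0 := by
    ext i k
    simp only [hM, Matrix.toBlocks₁₂, Matrix.of_apply, Matrix.submatrix_apply, Matrix.zero_apply]
    rw [hent]
    have hne : e (Sum.inl i) ≠ e (Sum.inr k) := by
      intro h
      have := congrArg Fin.val h
      rw [hval_l, hval_r] at this
      have hi := i.isLt
      omega
    rw [if_neg hne, escBf_eq_zero' n _ _ (by rw [hval_r]; omega)
      (by rw [hval_l, hval_r]; have := i.isLt; omega), map_zero, zero_sub, neg_zero]
  have hE : ∀ (i j : Fin 3) (v : ℝ), escBf n (i:ℕ) (j:ℕ) = v →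
      M.toBlocks₁₁ i j = (if i = j then X else 0) - C v := by
    intro i j v hv
    simp only [hM, Matrix.toBlocks₁₁, Matrix.of_apply, Matrix.submatrix_apply]
    rw [hent]
    congr 1
    · refine if_congr ⟨fun h => Sum.inl.inj (e.injective h), fun h => by rw [h]⟩ rfl rfl
    · rw [hval_l, hval_l, hv]
  have hEd : ∀ (i : Fin 3) (v : ℝ), escBf n (i:ℕ) (i:ℕ) = v → M.toBlocks₁₁ i i = X - C v := by
    intro i v hv
    rw [hE i i v hv, if_pos rfl]
  have hEo : ∀ (i j : Fin 3) (v : ℝ), i ≠ j → escBf n (i:ℕ) (j:ℕ) = v →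
      M.toBlocks₁₁ i j = -C v := by
    intro i j v hij hv
    rw [hE i j v hv, if_neg hij, zero_sub]
  have hdet1 : (M.toBlocks₁₁).det
      = X ^ 3 - C ((n : ℝ) - 2) * X ^ 2 - C (2 * (n : ℝ) - 1) * X
          + C ((n : ℝ) * ((n : ℝ) - 2)) := by
    rw [Matrix.det_fin_three,
      hEd 0 0 (by norm_num [escBf, escInd]),
      hEo 0 1 1 (by decide) (by norm_num [escBf]),
      hEo 0 2 1 (by decide) (by norm_num [escBf, escInd]),
      hEo 1 0 ((n:ℝ) - 1) (by decide) (by norm_num [escBf]),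
      hEd 1 ((n:ℝ) - 2) (by norm_num [escBf]),
      hEo 1 2 0 (by decide) (by norm_num [escBf, escInd]),
      hEo 2 0 (n:ℝ) (by decide) (by norm_num [escBf]),
      hEo 2 1 0 (by decide) (by norm_num [escBf, escInd]),
      hEd 2 0 (by norm_num [escBf, escInd])]
    simp only [map_zero, map_sub, map_add, map_neg, map_pow, _root_.map_mul, Polynomial.C_1, map_ofNat]
    ring
  have h22 : M.toBlocks₂₂
      = Matrix.diagonal (fun k : Fin (2*n-3) => if (k:ℕ) + 3 ≤ n then X + 1 else X) := by
    ext k l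
    simp only [hM, Matrix.toBlocks₂₂, Matrix.of_apply, Matrix.submatrix_apply]
    rw [hent]
    by_cases hkl : k = l
    · subst hkl
      rw [if_pos rfl, Matrix.diagonal_apply_eq, hval_r]
      by_cases hkn : (k:ℕ) + 3 ≤ n
      · rw [if_pos hkn]
        have hv : escBf n (3+(k:ℕ)) (3+(k:ℕ)) = -1 := by
          unfold escBf escInd
          rw [if_neg (by omega), if_neg (by omega), if_neg (by omega), if_pos (by omega),
            if_pos rfl]
        rw [hv, map_neg, Polynomial.C_1, sub_neg_eq_add]
      · rw [if_neg hkn]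
        have hv : escBf n (3+(k:ℕ)) (3+(k:ℕ)) = 0 := by
          unfold escBf
          rw [if_neg (by omega), if_neg (by omega), if_neg (by omega), if_neg (by omega)]
        rw [hv, map_zero, sub_zero]
    · have hne : e (Sum.inr k) ≠ e (Sum.inr l) := fun h => hkl (Sum.inr.inj (e.injective h))
      rw [if_neg hne, Matrix.diagonal_apply_ne _ hkl,
        escBf_eq_zero' n _ _ (by rw [hval_r]; omega)
          (by rw [hval_r, hval_r]; intro h; exact hkl (Fin.ext (by omega))),
        map_zero, zero_sub, neg_zero]
  have hdet2 : (M.toBlocks₂₂).det = (X + 1) ^ (n - 2) * X ^ (n - 1) := by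
    rw [h22, Matrix.det_diagonal]
    have h0 := Fin.prod_univ_eq_prod_range
      (fun k : ℕ => if k + 3 ≤ n then (X:ℝ[X]) + 1 else X) (2*n-3)
    refine h0.trans ?_
    rw [show 2*n - 3 = (n-2) + (n-1) from by omega, Finset.prod_range_add]
    have p1 : ∏ i ∈ range (n-2), (if i + 3 ≤ n then (X:ℝ[X]) + 1 else X) = (X + 1) ^ (n-2) := by
      rw [Finset.prod_congr rfl fun i hi => if_pos (by rw [Finset.mem_range] at hi; omega),
        Finset.prod_const, Finset.card_range]
    have p2 : ∏ i ∈ range (n-1), (if (n-2) + i + 3 ≤ n then (X:ℝ[X]) + 1 else X)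
        = X ^ (n-1) := by
      rw [Finset.prod_congr rfl fun i hi => if_neg (by omega),
        Finset.prod_const, Finset.card_range]
    rw [p1, p2]
  rw [← Matrix.fromBlocks_toBlocks M, h12, Matrix.det_fromBlocks_zero₁₂, hdet1, hdet2]
  ring

/-- For odd `n ≥ 3`, the characteristic polynomial of the adjacency matrix of
`K_1 ∨ (n·K_1 ⊔ K_{n-1})` is `λ^(n-1) (λ+1)^(n-2) (λ³ - (n-2)λ² - (2n-1)λ + n(n-2))`. -/
theorem charpoly_ESCom_dihedral_odd (n : ℕ) (hn : 3 ≤ n) (hodd : Odd n) :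
    (adjJoinOdd n).charpoly =
      X ^ (n - 1) * (X + 1) ^ (n - 2) *
        (X ^ 3 - C ((n : ℝ) - 2) * X ^ 2 - C (2 * (n : ℝ) - 1) * X
          + C ((n : ℝ) * ((n : ℝ) - 2))) := by
  have h := esc_charpoly_conj (adjJoinOdd n) (escB n) (escP n) (escQ n) (esc_QP n hn)
    (esc_AP n hn)
  rw [← h, esc_charpoly_B n hn]
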